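/- arXiv:1312.0772 — 3 statements merged into one kernel-verified Lean document; each statement's English description precedes it below -/
import Mathlib

section
/- For any graph G, λ(G) ≤ λ_g(G) ≤ λ(G) + 1. -/
/-!
Outside `S`, the trace of a vertex on `S` in `Gᶜ` is the complement in `S` of its trace in `G`, so
a set locates the vertices outside it in `G` if and only if it does so in `Gᶜ`. Hence an LD-set `S`
of `G` fails to be one of `Gᶜ` only through vertices outside `S` adjacent in `G` to all of `S`;
as `S` is locating, there is at most one such vertex, and adding it to `S` gives a global LD-set.
-/

variable {V : Type*}

/-- `S` is a dominating set of `G`: every vertex outside `S` has a neighbor in `S`. -/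
def IsDominatingSet (G : SimpleGraph V) (S : Set V) : Prop :=
  ∀ v ∉ S, (G.neighborSet v ∩ S).Nonempty

/-- `S` is a locating-dominating set of `G`. -/
def IsLDSet (G : SimpleGraph V) (S : Set V) : Prop :=
  IsDominatingSet G S ∧
    ∀ u ∉ S, ∀ v ∉ S, G.neighborSet u ∩ S = G.neighborSet v ∩ S → u = v

/-- The location-domination number of `G`. -/
noncomputable def ldNum [Fintype V] (G : SimpleGraph V) : ℕ :=
  sInf {n | ∃ S : Set V, IsLDSet G S ∧ S.ncard = n}

/-- `S` is a global LD-set of `G`: an LD-set of both `G` and its complement. -/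
def IsGlobalLDSet (G : SimpleGraph V) (S : Set V) : Prop :=
  IsLDSet G S ∧ IsLDSet Gᶜ S

/-- The global location-domination number of `G`. -/
noncomputable def gldNum [Fintype V] (G : SimpleGraph V) : ℕ :=
  sInf {n | ∃ S : Set V, IsGlobalLDSet G S ∧ S.ncard = n}

section Traces

variable {G : SimpleGraph V} {S : Set V} {x u v : V}

lemma compl_neighborSet_inter_eq_diff (hx : x ∉ S) :
    Gᶜ.neighborSet x ∩ S = S \ G.neighborSet x := by
  ext s
  simp only [Set.mem_inter_iff, Set.mem_sdiff, SimpleGraph.mem_neighborSet,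
    SimpleGraph.compl_adj]
  exact ⟨fun ⟨⟨_, hn⟩, hs⟩ => ⟨hs, hn⟩, fun ⟨hs, hn⟩ => ⟨⟨fun h => hx (h ▸ hs), hn⟩, hs⟩⟩

lemma neighborSet_inter_eq_diff_compl (hx : x ∉ S) :
    G.neighborSet x ∩ S = S \ (Gᶜ.neighborSet x ∩ S) := by
  rw [compl_neighborSet_inter_eq_diff hx, sdiff_sdiff_right_self]
  exact Set.inter_comm _ _

lemma neighborSet_inter_eq_of_compl (hu : u ∉ S) (hv : v ∉ S)
    (h : Gᶜ.neighborSet u ∩ S = Gᶜ.neighborSet v ∩ S) :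
    G.neighborSet u ∩ S = G.neighborSet v ∩ S := by
  rw [neighborSet_inter_eq_diff_compl hu, neighborSet_inter_eq_diff_compl hv, h]

lemma compl_neighborSet_inter_eq_empty_iff (hx : x ∉ S) :
    Gᶜ.neighborSet x ∩ S = ∅ ↔ G.neighborSet x ∩ S = S := by
  rw [compl_neighborSet_inter_eq_diff hx, Set.sdiff_eq_empty, Set.inter_eq_right]

end Traces

section LDSets

variable {G : SimpleGraph V} {S T : Set V}

lemma IsDominatingSet.mono (hS : IsDominatingSet G S) (hST : S ⊆ T) : IsDominatingSet G T :=
  fun v hv => (hS v fun h => hv (hST h)).mono (Set.inter_subset_inter_right _ hST)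

lemma IsLDSet.mono (hS : IsLDSet G S) (hST : S ⊆ T) : IsLDSet G T := by
  refine ⟨hS.1.mono hST, fun u hu v hv h => hS.2 u (fun h' => hu (hST h')) v
    (fun h' => hv (hST h')) ?_⟩
  have := congrArg (· ∩ S) h
  simpa only [Set.inter_assoc, Set.inter_eq_self_of_subset_right hST] using this

lemma isLDSet_univ (G : SimpleGraph V) : IsLDSet G Set.univ :=
  ⟨fun v hv => absurd (Set.mem_univ v) hv, fun u hu => absurd (Set.mem_univ u) hu⟩

lemma IsLDSet.isGlobalLDSet (hS : IsLDSet G S) (hdom : IsDominatingSet Gᶜ S) :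
    IsGlobalLDSet G S :=
  ⟨hS, hdom, fun u hu v hv h => hS.2 u hu v hv (neighborSet_inter_eq_of_compl hu hv h)⟩

lemma IsLDSet.isDominatingSet_compl_insert (hS : IsLDSet G S) {w : V} (hw : w ∉ S)
    (hw_empty : Gᶜ.neighborSet w ∩ S = ∅) : IsDominatingSet Gᶜ (insert w S) := by
  intro v hv
  rw [Set.mem_insert_iff, not_or] at hv
  obtain ⟨hvw, hvS⟩ := hv
  refine Set.Nonempty.mono (Set.inter_subset_inter_right _ (Set.subset_insert w S)) ?_
  rw [Set.nonempty_iff_ne_empty]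
  intro hv_empty
  refine hvw (hS.2 v hvS w hw ?_)
  rw [(compl_neighborSet_inter_eq_empty_iff hvS).1 hv_empty,
    (compl_neighborSet_inter_eq_empty_iff hw).1 hw_empty]

lemma IsLDSet.exists_isGlobalLDSet (hS : IsLDSet G S) :
    ∃ T, IsGlobalLDSet G T ∧ T.ncard ≤ S.ncard + 1 := by
  by_cases hdom : IsDominatingSet Gᶜ S
  · exact ⟨S, hS.isGlobalLDSet hdom, Nat.le_succ _⟩
  · obtain ⟨w, hw, hw_empty⟩ : ∃ w ∉ S, Gᶜ.neighborSet w ∩ S = ∅ := by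
      simpa only [IsDominatingSet, not_forall, Set.not_nonempty_iff_eq_empty, exists_prop]
        using hdom
    exact ⟨insert w S, (hS.mono (Set.subset_insert w S)).isGlobalLDSet
      (hS.isDominatingSet_compl_insert hw hw_empty), Set.ncard_insert_le w S⟩

end LDSets

section Numbers

variable [Fintype V] (G : SimpleGraph V)

lemma exists_isLDSet_ncard_eq_ldNum : ∃ S, IsLDSet G S ∧ S.ncard = ldNum G :=
  Nat.sInf_mem (s := {n | ∃ S : Set V, IsLDSet G S ∧ S.ncard = n})
    ⟨_, Set.univ, isLDSet_univ G, rfl⟩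

lemma exists_isGlobalLDSet_ncard_eq_gldNum : ∃ S, IsGlobalLDSet G S ∧ S.ncard = gldNum G :=
  Nat.sInf_mem (s := {n | ∃ S : Set V, IsGlobalLDSet G S ∧ S.ncard = n})
    ⟨_, Set.univ, ⟨isLDSet_univ G, isLDSet_univ Gᶜ⟩, rfl⟩

variable {G}

lemma IsLDSet.ldNum_le {S : Set V} (hS : IsLDSet G S) : ldNum G ≤ S.ncard :=
  Nat.sInf_le ⟨S, hS, rfl⟩

lemma IsGlobalLDSet.gldNum_le {S : Set V} (hS : IsGlobalLDSet G S) : gldNum G ≤ S.ncard :=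
  Nat.sInf_le ⟨S, hS, rfl⟩

end Numbers

theorem stmt11 [Fintype V] (G : SimpleGraph V) :
    ldNum G ≤ gldNum G ∧ gldNum G ≤ ldNum G + 1 := by
  constructor
  · obtain ⟨S, hS, hcard⟩ := exists_isGlobalLDSet_ncard_eq_gldNum G
    exact hcard ▸ hS.1.ldNum_le
  · obtain ⟨S, hS, hcard⟩ := exists_isLDSet_ncard_eq_ldNum G
    obtain ⟨T, hT, hTcard⟩ := hS.exists_isGlobalLDSet
    calc gldNum G ≤ T.ncard := hT.gldNum_le
      _ ≤ ldNum G + 1 := hcard ▸ hTcard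
end

section
/- For the complete bipartite graph K_{r,s} with 2 ≤ r ≤ s, λ(K_{r,s}) = r + s − 2 and λ(complement of K_{r,s}) = r + s − 2. -/
variable {V : Type*}

/-!
Vertices on the same side of `K_{r,s}` have equal neighbourhoods. For vertices outside `S`, the
traces on `S` of neighbourhoods in `Gᶜ` are the complements in `S` of those in `G`, so `G` and `Gᶜ`
have the same locating sets. Hence in both graphs a locating set misses at most one vertex per
side, and removing one vertex from each side (each side having a second vertex) leaves a
locating-dominating set.
-/

namespace SimpleGraph

variable {G : SimpleGraph V} {S : Set V}

def IsLocating (G : SimpleGraph V) (S : Set V) : Prop :=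
  ∀ u ∉ S, ∀ v ∉ S, G.neighborSet u ∩ S = G.neighborSet v ∩ S → u = v

theorem compl_neighborSet_inter_of_notMem {u : V} (hu : u ∉ S) :
    Gᶜ.neighborSet u ∩ S = S \ G.neighborSet u := by
  ext w
  simp only [Set.mem_inter_iff, mem_neighborSet, compl_adj, Set.mem_sdiff]
  exact ⟨fun ⟨⟨_, hnadj⟩, hw⟩ => ⟨hw, hnadj⟩,
    fun ⟨hw, hnadj⟩ => ⟨⟨fun huw => hu (huw ▸ hw), hnadj⟩, hw⟩⟩

theorem IsLocating.compl (h : IsLocating G S) : IsLocating Gᶜ S := by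
  intro u hu v hv huv
  rw [compl_neighborSet_inter_of_notMem hu, compl_neighborSet_inter_of_notMem hv] at huv
  refine h u hu v hv ?_
  simpa only [Set.sdiff_sdiff_right_self, Set.inter_comm S] using congrArg (S \ ·) huv

theorem IsLocating.injOn_of_neighborSet_eq {β : Type*} (h : IsLocating G S) {f : V → β}
    (hf : ∀ u v, f u = f v → G.neighborSet u = G.neighborSet v) : Set.InjOn f Sᶜ :=
  fun u hu v hv huv => h u hu v hv (by rw [hf u v huv])

theorem isLDSet_compl_pair {a b : V}
    (hsep : ∃ x ∈ ({a, b}ᶜ : Set V), G.Adj a x ∧ ¬ G.Adj b x)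
    (hb : ∃ x ∈ ({a, b}ᶜ : Set V), G.Adj b x) : IsLDSet G {a, b}ᶜ := by
  obtain ⟨x, hx, hax, hbx⟩ := hsep
  have hpair : ∀ {v}, v ∉ ({a, b}ᶜ : Set V) → v = a ∨ v = b := fun hv => by
    simpa [or_iff_not_imp_left] using hv
  have separates : G.neighborSet a ∩ {a, b}ᶜ ≠ G.neighborSet b ∩ {a, b}ᶜ := fun h =>
    hbx (show x ∈ G.neighborSet b ∩ {a, b}ᶜ from h ▸ ⟨hax, hx⟩).1
  refine ⟨fun v hv => ?_, fun u hu v hv huv => ?_⟩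
  · rcases hpair hv with rfl | rfl
    exacts [⟨x, hax, hx⟩, hb.imp fun y ⟨hy, hby⟩ => ⟨hby, hy⟩]
  · rcases hpair hu with rfl | rfl <;> rcases hpair hv with rfl | rfl
    exacts [rfl, (separates huv).elim, (separates huv.symm).elim, rfl]

theorem ldNum_eq_ncard [Fintype V] (hS : IsLDSet G S)
    (hmin : ∀ T, IsLDSet G T → S.ncard ≤ T.ncard) : ldNum G = S.ncard :=
  le_antisymm (Nat.sInf_le ⟨S, hS, rfl⟩)
    (le_csInf ⟨_, S, hS, rfl⟩ fun _ ⟨T, hT, hn⟩ => hn ▸ hmin T hT)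

section CompleteBipartite

variable {α β : Type*}

theorem completeBipartiteGraph_neighborSet_eq {u v : α ⊕ β} (h : u.isLeft = v.isLeft) :
    (completeBipartiteGraph α β).neighborSet u = (completeBipartiteGraph α β).neighborSet v := by
  ext w
  cases u <;> cases v <;> simp_all [completeBipartiteGraph]

theorem card_sub_two_le_ncard_of_injOn_isLeft [Finite α] [Finite β] {S : Set (α ⊕ β)}
    (h : Set.InjOn Sum.isLeft Sᶜ) : Nat.card α + Nat.card β - 2 ≤ S.ncard := by
  have hcompl : Sᶜ.ncard ≤ 2 := by
    simpa [h.ncard_image] using Set.ncard_le_card (Sum.isLeft '' Sᶜ)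
  have := Set.ncard_add_ncard_compl S
  rw [Nat.card_sum] at this
  omega

theorem IsLocating.card_sub_two_le_ncard [Finite α] [Finite β] {S : Set (α ⊕ β)}
    (h : IsLocating (completeBipartiteGraph α β) S) : Nat.card α + Nat.card β - 2 ≤ S.ncard :=
  card_sub_two_le_ncard_of_injOn_isLeft
    (h.injOn_of_neighborSet_eq fun _ _ => completeBipartiteGraph_neighborSet_eq)

end CompleteBipartite

end SimpleGraph

open SimpleGraph

theorem stmt17 (r s : ℕ) (hr : 2 ≤ r) (hrs : r ≤ s) :
    ldNum (completeBipartiteGraph (Fin r) (Fin s)) = r + s - 2 ∧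
    ldNum (completeBipartiteGraph (Fin r) (Fin s))ᶜ = r + s - 2 := by
  have hs : 2 ≤ s := hr.trans hrs
  let K := completeBipartiteGraph (Fin r) (Fin s)
  let a : Fin r ⊕ Fin s := .inl ⟨0, by omega⟩
  let b : Fin r ⊕ Fin s := .inr ⟨0, by omega⟩
  let a' : Fin r ⊕ Fin s := .inl ⟨1, by omega⟩
  let b' : Fin r ⊕ Fin s := .inr ⟨1, by omega⟩
  have ha' : a' ∈ ({a, b}ᶜ : Set _) := by simp [a, a', b]
  have hb' : b' ∈ ({a, b}ᶜ : Set _) := by simp [a, b, b']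
  have hcard : ({a, b}ᶜ : Set _).ncard = r + s - 2 := by
    rw [Set.ncard_compl, Set.ncard_pair (by simp [a, b])]
    simp
  have lower : ∀ T, IsLocating K T → r + s - 2 ≤ T.ncard := fun T hT => by
    simpa using hT.card_sub_two_le_ncard
  constructor
  · have hLD : IsLDSet K {a, b}ᶜ :=
      isLDSet_compl_pair ⟨b', hb', by simp [K, a, b, b']⟩ ⟨a', ha', by simp [K, b, a']⟩
    rw [ldNum_eq_ncard hLD fun T hT => hcard ▸ lower T hT.2, hcard]
  · have hLD : IsLDSet Kᶜ {a, b}ᶜ :=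
      isLDSet_compl_pair ⟨a', ha', by simp [K, a, b, a', Fin.ext_iff]⟩
        ⟨b', hb', by simp [K, b, b', Fin.ext_iff]⟩
    have hmin T (hT : IsLDSet Kᶜ T) : r + s - 2 ≤ T.ncard :=
      lower T (by simpa using IsLocating.compl hT.2)
    rw [ldNum_eq_ncard hLD (hcard ▸ hmin), hcard]
end

section
/- Let G be a block-cactus, S an LD-set of G, u ∈ V \ S a vertex with S ⊆ N(u), and let W = V \ N[u]. Then for every w ∈ W, 1 ≤ |N(u) ∩ N(w)| ≤ 2; moreover if N(u) ∩ N(w) = {x} is a single vertex, then x ∈ S, and if N(u) ∩ N(w) = {x,y} has two vertices, then x and y are not adjacent. -/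
variable {V : Type*}

/-- The induced subgraph on `B` is connected and has no cut vertex:
removing any vertex keeps it (pre)connected. -/
def NoCutVertexOn (G : SimpleGraph V) (B : Set V) : Prop :=
  ∀ v : V, (G.induce (B \ {v})).Preconnected

/-- `B` is a block of `G`: a maximal vertex set inducing a connected
subgraph with no cut vertex. -/
def IsBlock (G : SimpleGraph V) (B : Set V) : Prop :=
  (G.induce B).Connected ∧ NoCutVertexOn G B ∧
    ∀ C : Set V, B ⊆ C → (G.induce C).Connected → NoCutVertexOn G C → B = C

/-- The induced subgraph on `B` is complete. -/
def IsCompleteOn (G : SimpleGraph V) (B : Set V) : Prop :=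
  ∀ x ∈ B, ∀ y ∈ B, x ≠ y → G.Adj x y

/-- The induced subgraph on `B` is a cycle: connected and 2-regular. -/
def IsCycleOn (G : SimpleGraph V) (B : Set V) : Prop :=
  (G.induce B).Connected ∧ ∀ v : B, ((G.induce B).neighborSet v).ncard = 2

/-- `G` is a block-cactus: connected, and every block is a cycle or complete. -/
def IsBlockCactus (G : SimpleGraph V) : Prop :=
  G.Connected ∧ ∀ B : Set V, IsBlock G B → IsCycleOn G B ∨ IsCompleteOn G B

/-
In a block-cactus, let `u` and `w` be distinct non-adjacent vertices with at least two common
neighbours. Then `u`, `w` and their common neighbours induce a 2-connected subgraph, which lies in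
a block. That block contains the non-edge `uw`, so it is a cycle, where every vertex has exactly two
neighbours. Hence `u` has at most two neighbours in it, and two common neighbours `x`, `y` cannot
be adjacent, as `x` would have the three neighbours `u`, `w`, `y`. Finally `w ∉ S ⊆ N(u)`, so `w`
has a neighbour in the LD-set `S`, and it is a common neighbour of `u` and `w`.
-/

section

open SimpleGraph

variable {G : SimpleGraph V}

lemma preconnected_induce_of_common_neighbors {X : Set V} {u w t : V}
    (hX : ∀ a ∈ X, a = u ∨ a = w ∨ (G.Adj u a ∧ G.Adj w a))
    (hu : u ∈ X) (ht : t ∈ X) (hwt : G.Adj w t) (hut : G.Adj u t) :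
    (G.induce X).Preconnected := by
  have reach_of_adj : ∀ {a b : V} (ha : a ∈ X) (hb : b ∈ X), G.Adj a b →
      (G.induce X).Reachable ⟨a, ha⟩ ⟨b, hb⟩ := fun _ _ h => Adj.reachable (by simpa using h)
  have reach_u : ∀ a (ha : a ∈ X), (G.induce X).Reachable ⟨a, ha⟩ ⟨u, hu⟩ := by
    intro a ha
    rcases hX a ha with rfl | rfl | ⟨hua, -⟩
    · rfl
    · exact (reach_of_adj ha ht hwt).trans (reach_of_adj ht hu hut.symm)
    · exact reach_of_adj ha hu hua.symm
  intro x y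
  exact (reach_u x x.2).trans (reach_u y y.2).symm

section CommonNeighbors

variable {u w t₁ : V} {T : Set V} (hT : ∀ t ∈ T, G.Adj u t ∧ G.Adj w t) (ht₁ : t₁ ∈ T)
include hT ht₁

lemma connected_induce_insert_insert_of_common_neighbors :
    (G.induce (insert u (insert w T))).Connected := by
  have hX : ∀ a ∈ insert u (insert w T), a = u ∨ a = w ∨ (G.Adj u a ∧ G.Adj w a) := by
    rintro a (rfl | rfl | ha)
    exacts [Or.inl rfl, Or.inr (Or.inl rfl), Or.inr (Or.inr (hT a ha))]
  have huX : u ∈ insert u (insert w T) := Set.mem_insert _ _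
  refine (connected_iff _).mpr ⟨?_, ⟨⟨u, huX⟩⟩⟩
  exact preconnected_induce_of_common_neighbors hX huX (by simp [ht₁]) (hT t₁ ht₁).2 (hT t₁ ht₁).1

lemma noCutVertexOn_insert_insert_of_common_neighbors {t₂ : V} (ht₂ : t₂ ∈ T) (h12 : t₁ ≠ t₂)
    (huw : u ≠ w) :
    NoCutVertexOn G (insert u (insert w T)) := by
  intro v
  obtain ⟨t, htT, htv⟩ : ∃ t ∈ T, t ≠ v := by
    by_cases h : t₁ = v
    · exact ⟨t₂, ht₂, fun h' => h12 (h.trans h'.symm)⟩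
    · exact ⟨t₁, ht₁, h⟩
  have hX : ∀ a ∈ insert u (insert w T) \ {v}, a = u ∨ a = w ∨ (G.Adj u a ∧ G.Adj w a) := by
    rintro a ⟨rfl | rfl | ha, -⟩
    exacts [Or.inl rfl, Or.inr (Or.inl rfl), Or.inr (Or.inr (hT a ha))]
  have htX : t ∈ insert u (insert w T) \ {v} := ⟨by simp [htT], htv⟩
  -- Use as hub whichever of `u`, `w` is not the removed vertex `v`.
  by_cases huv : u = v
  · refine preconnected_induce_of_common_neighbors (fun a ha => ?_) ⟨by simp, ?_⟩ htX
      (hT t htT).1 (hT t htT).2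
    · rcases hX a ha with h | h | ⟨hua, hwa⟩
      exacts [Or.inr (Or.inl h), Or.inl h, Or.inr (Or.inr ⟨hwa, hua⟩)]
    · exact fun h => huw (huv.trans h.symm)
  · exact preconnected_induce_of_common_neighbors hX ⟨by simp, huv⟩ htX
      (hT t htT).2 (hT t htT).1

end CommonNeighbors

lemma exists_isBlock_superset [Finite V] {B : Set V}
    (hconn : (G.induce B).Connected) (hB : NoCutVertexOn G B) :
    ∃ C, B ⊆ C ∧ IsBlock G C := by
  obtain ⟨C, ⟨hBC, hCconn, hC⟩, hmax⟩ := Set.Finite.exists_maximalFor id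
    {C | B ⊆ C ∧ (G.induce C).Connected ∧ NoCutVertexOn G C} (Set.toFinite _)
    ⟨B, subset_rfl, hconn, hB⟩
  exact ⟨C, hBC, hCconn, hC, fun C' hCC' hconn' h' =>
    le_antisymm hCC' (hmax ⟨hBC.trans hCC', hconn', h'⟩ hCC')⟩

lemma IsCycleOn.ncard_neighborSet_inter_eq_two {C : Set V} (hC : IsCycleOn G C) {c : V}
    (hc : c ∈ C) : (G.neighborSet c ∩ C).ncard = 2 := by
  have himage : G.neighborSet c ∩ C = Subtype.val '' (G.induce C).neighborSet ⟨c, hc⟩ := by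
    ext a
    constructor
    · rintro ⟨hca, haC⟩
      exact ⟨⟨a, haC⟩, by simpa using hca, rfl⟩
    · rintro ⟨a, hca, rfl⟩
      exact ⟨by simpa using hca, a.2⟩
  rw [himage, Set.ncard_image_of_injective _ Subtype.val_injective, hC.2]

lemma IsBlockCactus.exists_isCycleOn_of_common_neighbors [Finite V] (hG : IsBlockCactus G)
    {u w t₁ t₂ : V} (huw : u ≠ w) (hnadj : ¬ G.Adj u w)
    (ht₁ : t₁ ∈ G.neighborSet u ∩ G.neighborSet w) (ht₂ : t₂ ∈ G.neighborSet u ∩ G.neighborSet w)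
    (h12 : t₁ ≠ t₂) :
    ∃ C, IsCycleOn G C ∧ insert u (insert w (G.neighborSet u ∩ G.neighborSet w)) ⊆ C := by
  have hT : ∀ t ∈ G.neighborSet u ∩ G.neighborSet w, G.Adj u t ∧ G.Adj w t := fun _ h => h
  obtain ⟨C, hBC, hC⟩ := exists_isBlock_superset
    (connected_induce_insert_insert_of_common_neighbors hT ht₁)
    (noCutVertexOn_insert_insert_of_common_neighbors hT ht₁ ht₂ h12 huw)
  refine ⟨C, (hG.2 C hC).resolve_right ?_, hBC⟩
  exact fun hcomplete => hnadj (hcomplete u (hBC (by simp)) w (hBC (by simp)) huw)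

lemma IsBlockCactus.ncard_common_neighbors_le_two [Finite V] (hG : IsBlockCactus G) {u w : V}
    (huw : u ≠ w) (hnadj : ¬ G.Adj u w) :
    (G.neighborSet u ∩ G.neighborSet w).ncard ≤ 2 := by
  by_contra! hlt
  obtain ⟨t₁, t₂, ht₁, ht₂, h12⟩ :=
    (Set.one_lt_ncard_iff (s := G.neighborSet u ∩ G.neighborSet w)).mp (by omega)
  obtain ⟨C, hC, hsub⟩ := hG.exists_isCycleOn_of_common_neighbors huw hnadj ht₁ ht₂ h12
  have hle : (G.neighborSet u ∩ G.neighborSet w).ncard ≤ (G.neighborSet u ∩ C).ncard :=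
    Set.ncard_le_ncard (fun t ht => ⟨ht.1, hsub (by simp [ht])⟩) (Set.toFinite _)
  rw [hC.ncard_neighborSet_inter_eq_two (hsub (Set.mem_insert u _))] at hle
  omega

lemma IsBlockCactus.not_adj_of_common_neighbors [Finite V] (hG : IsBlockCactus G) {u w x y : V}
    (huw : u ≠ w) (hnadj : ¬ G.Adj u w)
    (hx : x ∈ G.neighborSet u ∩ G.neighborSet w) (hy : y ∈ G.neighborSet u ∩ G.neighborSet w)
    (hxy : x ≠ y) : ¬ G.Adj x y := by
  intro hadj
  obtain ⟨C, hC, hsub⟩ := hG.exists_isCycleOn_of_common_neighbors huw hnadj hx hy hxy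
  have hthree : ({u, w, y} : Set V).ncard = 3 :=
    Set.ncard_eq_three.mpr ⟨u, w, y, huw, hy.1.ne, hy.2.ne, rfl⟩
  have hle : ({u, w, y} : Set V).ncard ≤ (G.neighborSet x ∩ C).ncard := by
    refine Set.ncard_le_ncard ?_ (Set.toFinite _)
    rintro a (rfl | rfl | rfl)
    · exact ⟨hx.1.symm, hsub (by simp)⟩
    · exact ⟨hx.2.symm, hsub (by simp)⟩
    · exact ⟨hadj, hsub (by simp [hy])⟩
  rw [hthree, hC.ncard_neighborSet_inter_eq_two (hsub (by simp [hx]))] at hle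
  omega

end

theorem stmt19_general [Fintype V] (G : SimpleGraph V) (hG : IsBlockCactus G)
    (S : Set V) (hS : IsLDSet G S) (u : V)
    (hdom : S ⊆ G.neighborSet u) (w : V) (hw : w ∉ insert u (G.neighborSet u)) :
    (1 ≤ (G.neighborSet u ∩ G.neighborSet w).ncard ∧
      (G.neighborSet u ∩ G.neighborSet w).ncard ≤ 2) ∧
    (∀ x : V, G.neighborSet u ∩ G.neighborSet w = {x} → x ∈ S) ∧
    (∀ x y : V, x ≠ y → G.neighborSet u ∩ G.neighborSet w = {x, y} →
      ¬ G.Adj x y) := by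
  have huw : u ≠ w := fun h => hw (h ▸ Set.mem_insert _ _)
  have hnadj : ¬ G.Adj u w := fun h => hw (Set.mem_insert_of_mem _ h)
  obtain ⟨s, hws, hsS⟩ := hS.1 w fun hwS => hnadj (hdom hwS)
  have hs : s ∈ G.neighborSet u ∩ G.neighborSet w := ⟨hdom hsS, hws⟩
  refine ⟨⟨(Set.ncard_pos).mpr ⟨s, hs⟩,
    hG.ncard_common_neighbors_le_two huw hnadj⟩, fun x hx => ?_, fun x y hxy hxy' => ?_⟩
  · rw [hx, Set.mem_singleton_iff] at hs
    exact hs ▸ hsS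
  · exact hG.not_adj_of_common_neighbors huw hnadj (by simp [hxy']) (by simp [hxy']) hxy

theorem stmt19 [Fintype V] (G : SimpleGraph V) (hG : IsBlockCactus G)
    (S : Set V) (hS : IsLDSet G S) (u : V) (hu : u ∉ S)
    (hdom : S ⊆ G.neighborSet u) (w : V) (hw : w ∉ insert u (G.neighborSet u)) :
    (1 ≤ (G.neighborSet u ∩ G.neighborSet w).ncard ∧
      (G.neighborSet u ∩ G.neighborSet w).ncard ≤ 2) ∧
    (∀ x : V, G.neighborSet u ∩ G.neighborSet w = {x} → x ∈ S) ∧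
    (∀ x y : V, x ≠ y → G.neighborSet u ∩ G.neighborSet w = {x, y} →
      ¬ G.Adj x y) :=
  stmt19_general G hG S hS u hdom w hw
end
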